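/- Let X be a random variable whose law has density f(x) = 1/2 for x ∈ [0,1/2) and f(x) = 3/2 for x ∈ [1/2, 1] (and 0 elsewhere). Then for j ∈ {2, 3} and all b₁, b_j ∈ {0,1}, P[B_1(X) = b₁, B_j(X) = b_j] = P[B_1(X) = b₁] · P[B_j(X) = b_j]; explicitly, P[B_1(X)=0, B_j(X)=0] = P[B_1(X)=0, B_j(X)=1] = 1/8 and P[B_1(X)=1, B_j(X)=0] = P[B_1(X)=1, B_j(X)=1] = 3/8. Hence B_1(X) is independent of B_2(X) and of B_3(X), even though f is not symmetric around 1/2. -/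
import Mathlib


open MeasureTheory ProbabilityTheory Set
open scoped ENNReal

/-- The `i`-th binary digit of `x ∈ [0,1]`: `B_i(x) = ⌊2^i x⌋ mod 2`. -/
noncomputable def binDigit (i : ℕ) (x : ℝ) : ℤ := ⌊(2:ℝ)^i * x⌋ % 2

/-- The density `f(x) = 1/2` on `[0,1/2)`, `f(x) = 3/2` on `[1/2,1]`, `0` elsewhere. -/
noncomputable def stepDensity (x : ℝ) : ℝ :=
  if x ∈ Set.Ico (0:ℝ) (1/2) then 1/2 else if x ∈ Set.Icc (1/2 : ℝ) 1 then 3/2 else 0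

lemma measurable_binDigit (i : ℕ) : Measurable (binDigit i) := by
  have h1 : Measurable fun x : ℝ => (2:ℝ)^i * x := (measurable_id.const_mul _ : _)
  have h2 : Measurable fun n : ℤ => n % 2 := measurable_from_top
  exact h2.comp (Int.measurable_floor.comp h1)

lemma binDigit_zero_or_one (i : ℕ) (x : ℝ) : binDigit i x = 0 ∨ binDigit i x = 1 := by
  unfold binDigit; omega

lemma digit_on (i : ℕ) (n : ℤ) {x a b : ℝ} (hx : x ∈ Ico a b)
    (ha : (n:ℝ) ≤ 2^i * a) (hb : 2^i * b ≤ (n:ℝ)+1) : binDigit i x = n % 2 := by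
  have hp : (0:ℝ) < 2^i := by positivity
  have h1 : (n:ℝ) ≤ 2^i * x := le_trans ha (by nlinarith [hx.1])
  have h2 : 2^i * x < (n:ℝ)+1 := lt_of_lt_of_le (by nlinarith [hx.2]) hb
  unfold binDigit
  rw [Int.floor_eq_iff.mpr ⟨h1, h2⟩]

lemma b1_left {x : ℝ} (hx : x ∈ Ico (0:ℝ) (1/2)) : binDigit 1 x = 0 := by
  have := digit_on 1 0 hx (by norm_num) (by norm_num); omega

lemma b1_right {x : ℝ} (hx : x ∈ Ico (1/2:ℝ) 1) : binDigit 1 x = 1 := by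
  have := digit_on 1 1 hx (by norm_num) (by norm_num); omega

lemma g20L : {x : ℝ | binDigit 2 x = 0} ∩ Ico (0:ℝ) (1/2) = Ico (0:ℝ) (1/4) := by
  ext x
  simp only [mem_inter_iff, mem_setOf_eq, mem_Ico]
  constructor
  · rintro ⟨hd, h0, h1⟩
    refine ⟨h0, ?_⟩
    by_contra h
    push_neg at h
    have := digit_on 2 1 (mem_Ico.mpr ⟨h, h1⟩) (by norm_num) (by norm_num)
    omega
  · rintro ⟨h0, h1⟩
    have := digit_on 2 0 (mem_Ico.mpr ⟨h0, h1⟩) (by norm_num) (by norm_num)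
    exact ⟨by omega, h0, by linarith⟩

lemma g21L : {x : ℝ | binDigit 2 x = 1} ∩ Ico (0:ℝ) (1/2) = Ico (1/4:ℝ) (1/2) := by
  ext x
  simp only [mem_inter_iff, mem_setOf_eq, mem_Ico]
  constructor
  · rintro ⟨hd, h0, h1⟩
    refine ⟨?_, h1⟩
    by_contra h
    push_neg at h
    have := digit_on 2 0 (mem_Ico.mpr ⟨h0, h⟩) (by norm_num) (by norm_num)
    omega
  · rintro ⟨h0, h1⟩
    have := digit_on 2 1 (mem_Ico.mpr ⟨h0, h1⟩) (by norm_num) (by norm_num)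
    exact ⟨by omega, by linarith, h1⟩

lemma g20R : {x : ℝ | binDigit 2 x = 0} ∩ Ico (1/2:ℝ) 1 = Ico (1/2:ℝ) (3/4) := by
  ext x
  simp only [mem_inter_iff, mem_setOf_eq, mem_Ico]
  constructor
  · rintro ⟨hd, h0, h1⟩
    refine ⟨h0, ?_⟩
    by_contra h
    push_neg at h
    have := digit_on 2 3 (mem_Ico.mpr ⟨h, h1⟩) (by norm_num) (by norm_num)
    omega
  · rintro ⟨h0, h1⟩
    have := digit_on 2 2 (mem_Ico.mpr ⟨h0, h1⟩) (by norm_num) (by norm_num)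
    exact ⟨by omega, h0, by linarith⟩

lemma g21R : {x : ℝ | binDigit 2 x = 1} ∩ Ico (1/2:ℝ) 1 = Ico (3/4:ℝ) 1 := by
  ext x
  simp only [mem_inter_iff, mem_setOf_eq, mem_Ico]
  constructor
  · rintro ⟨hd, h0, h1⟩
    refine ⟨?_, h1⟩
    by_contra h
    push_neg at h
    have := digit_on 2 2 (mem_Ico.mpr ⟨h0, h⟩) (by norm_num) (by norm_num)
    omega
  · rintro ⟨h0, h1⟩
    have := digit_on 2 3 (mem_Ico.mpr ⟨h0, h1⟩) (by norm_num) (by norm_num)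
    exact ⟨by omega, by linarith, h1⟩

lemma g30L : {x : ℝ | binDigit 3 x = 0} ∩ Ico (0:ℝ) (1/2)
    = Ico (0:ℝ) (1/8) ∪ Ico (1/4:ℝ) (3/8) := by
  ext x
  simp only [mem_inter_iff, mem_setOf_eq, mem_Ico, mem_union]
  constructor
  · rintro ⟨hd, h0, h1⟩
    by_cases c1 : x < 1/8
    · exact Or.inl ⟨h0, c1⟩
    push_neg at c1
    by_cases c2 : x < 1/4
    · have := digit_on 3 1 (mem_Ico.mpr ⟨c1, c2⟩) (by norm_num) (by norm_num); omega
    push_neg at c2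
    by_cases c3 : x < 3/8
    · exact Or.inr ⟨c2, c3⟩
    push_neg at c3
    have := digit_on 3 3 (mem_Ico.mpr ⟨c3, h1⟩) (by norm_num) (by norm_num); omega
  · rintro (⟨h0, h1⟩ | ⟨h0, h1⟩)
    · have := digit_on 3 0 (mem_Ico.mpr ⟨h0, h1⟩) (by norm_num) (by norm_num)
      exact ⟨by omega, h0, by linarith⟩
    · have := digit_on 3 2 (mem_Ico.mpr ⟨h0, h1⟩) (by norm_num) (by norm_num)
      exact ⟨by omega, by linarith, by linarith⟩

lemma g31L : {x : ℝ | binDigit 3 x = 1} ∩ Ico (0:ℝ) (1/2)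
    = Ico (1/8:ℝ) (1/4) ∪ Ico (3/8:ℝ) (1/2) := by
  ext x
  simp only [mem_inter_iff, mem_setOf_eq, mem_Ico, mem_union]
  constructor
  · rintro ⟨hd, h0, h1⟩
    by_cases c1 : x < 1/8
    · have := digit_on 3 0 (mem_Ico.mpr ⟨h0, c1⟩) (by norm_num) (by norm_num); omega
    push_neg at c1
    by_cases c2 : x < 1/4
    · exact Or.inl ⟨c1, c2⟩
    push_neg at c2
    by_cases c3 : x < 3/8
    · have := digit_on 3 2 (mem_Ico.mpr ⟨c2, c3⟩) (by norm_num) (by norm_num); omega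
    push_neg at c3
    exact Or.inr ⟨c3, h1⟩
  · rintro (⟨h0, h1⟩ | ⟨h0, h1⟩)
    · have := digit_on 3 1 (mem_Ico.mpr ⟨h0, h1⟩) (by norm_num) (by norm_num)
      exact ⟨by omega, by linarith, by linarith⟩
    · have := digit_on 3 3 (mem_Ico.mpr ⟨h0, h1⟩) (by norm_num) (by norm_num)
      exact ⟨by omega, by linarith, h1⟩

lemma g30R : {x : ℝ | binDigit 3 x = 0} ∩ Ico (1/2:ℝ) 1
    = Ico (1/2:ℝ) (5/8) ∪ Ico (3/4:ℝ) (7/8) := by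
  ext x
  simp only [mem_inter_iff, mem_setOf_eq, mem_Ico, mem_union]
  constructor
  · rintro ⟨hd, h0, h1⟩
    by_cases c1 : x < 5/8
    · exact Or.inl ⟨h0, c1⟩
    push_neg at c1
    by_cases c2 : x < 3/4
    · have := digit_on 3 5 (mem_Ico.mpr ⟨c1, c2⟩) (by norm_num) (by norm_num); omega
    push_neg at c2
    by_cases c3 : x < 7/8
    · exact Or.inr ⟨c2, c3⟩
    push_neg at c3
    have := digit_on 3 7 (mem_Ico.mpr ⟨c3, h1⟩) (by norm_num) (by norm_num); omega
  · rintro (⟨h0, h1⟩ | ⟨h0, h1⟩)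
    · have := digit_on 3 4 (mem_Ico.mpr ⟨h0, h1⟩) (by norm_num) (by norm_num)
      exact ⟨by omega, h0, by linarith⟩
    · have := digit_on 3 6 (mem_Ico.mpr ⟨h0, h1⟩) (by norm_num) (by norm_num)
      exact ⟨by omega, by linarith, by linarith⟩

lemma g31R : {x : ℝ | binDigit 3 x = 1} ∩ Ico (1/2:ℝ) 1
    = Ico (5/8:ℝ) (3/4) ∪ Ico (7/8:ℝ) 1 := by
  ext x
  simp only [mem_inter_iff, mem_setOf_eq, mem_Ico, mem_union]
  constructor
  · rintro ⟨hd, h0, h1⟩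
    by_cases c1 : x < 5/8
    · have := digit_on 3 4 (mem_Ico.mpr ⟨h0, c1⟩) (by norm_num) (by norm_num); omega
    push_neg at c1
    by_cases c2 : x < 3/4
    · exact Or.inl ⟨c1, c2⟩
    push_neg at c2
    by_cases c3 : x < 7/8
    · have := digit_on 3 6 (mem_Ico.mpr ⟨c2, c3⟩) (by norm_num) (by norm_num); omega
    push_neg at c3
    exact Or.inr ⟨c3, h1⟩
  · rintro (⟨h0, h1⟩ | ⟨h0, h1⟩)
    · have := digit_on 3 5 (mem_Ico.mpr ⟨h0, h1⟩) (by norm_num) (by norm_num)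
      exact ⟨by omega, by linarith, by linarith⟩
    · have := digit_on 3 7 (mem_Ico.mpr ⟨h0, h1⟩) (by norm_num) (by norm_num)
      exact ⟨by omega, by linarith, h1⟩

lemma stepLaw_eq :
    (volume.withDensity fun x => ENNReal.ofReal (stepDensity x))
      = ENNReal.ofReal (1/2) • volume.restrict (Ico (0:ℝ) (1/2))
        + ENNReal.ofReal (3/2) • volume.restrict (Icc (1/2:ℝ) 1) := by
  have hfun : (fun x => ENNReal.ofReal (stepDensity x))
      = ((Ico (0:ℝ) (1/2)).indicator fun _ => ENNReal.ofReal (1/2))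
        + ((Icc (1/2:ℝ) 1).indicator fun _ => ENNReal.ofReal (3/2)) := by
    funext x
    simp only [Pi.add_apply, indicator, stepDensity]
    split_ifs with h1 h2 h2
    · exact absurd ((mem_Icc.mp h2).1) (not_le.mpr (mem_Ico.mp h1).2)
    · simp
    · simp
    · simp
  rw [hfun, withDensity_add_left (measurable_const.indicator measurableSet_Ico),
    withDensity_indicator measurableSet_Ico, withDensity_indicator measurableSet_Icc,
    withDensity_const, withDensity_const]

lemma vol_Icc_Ico (S : Set ℝ) :
    volume (S ∩ Icc (1/2:ℝ) 1) = volume (S ∩ Ico (1/2:ℝ) 1) := by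
  apply le_antisymm
  · have hsub : S ∩ Icc (1/2:ℝ) 1 ⊆ (S ∩ Ico (1/2:ℝ) 1) ∪ {1} := by
      rintro x ⟨hxS, hx0, hx1⟩
      rcases lt_or_eq_of_le hx1 with h | h
      · exact Or.inl ⟨hxS, hx0, h⟩
      · exact Or.inr (by simp [h])
    calc volume (S ∩ Icc (1/2:ℝ) 1) ≤ volume ((S ∩ Ico (1/2:ℝ) 1) ∪ {1}) :=
          measure_mono hsub
      _ ≤ volume (S ∩ Ico (1/2:ℝ) 1) + volume {1} := measure_union_le _ _
      _ = volume (S ∩ Ico (1/2:ℝ) 1) := by simp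
  · exact measure_mono (inter_subset_inter_right _ Ico_subset_Icc_self)

lemma indep_of_binary {Ω : Type*} [MeasureSpace Ω] [IsProbabilityMeasure (ℙ : Measure Ω)]
    {f g : Ω → ℤ} (hf : ∀ ω, f ω = 0 ∨ f ω = 1) (hg : ∀ ω, g ω = 0 ∨ g ω = 1)
    (h : ∀ a b : ℤ, (a = 0 ∨ a = 1) → (b = 0 ∨ b = 1) →
      ℙ (f ⁻¹' {a} ∩ g ⁻¹' {b}) = ℙ (f ⁻¹' {a}) * ℙ (g ⁻¹' {b})) :
    IndepFun f g ℙ := by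
  classical
  have hA : f ⁻¹' {0} ∪ f ⁻¹' {1} = univ := by
    ext ω; simpa using hf ω
  have hB : g ⁻¹' {0} ∪ g ⁻¹' {1} = univ := by
    ext ω; simpa using hg ω
  have hfs : ∀ s : Set ℤ, f ⁻¹' s
      = (if (0:ℤ) ∈ s then f ⁻¹' {0} else ∅) ∪ (if (1:ℤ) ∈ s then f ⁻¹' {1} else ∅) := by
    intro s
    ext ω
    rcases hf ω with h0 | h0 <;>
      by_cases hs0 : (0:ℤ) ∈ s <;> by_cases hs1 : (1:ℤ) ∈ s <;>
        simp [h0, hs0, hs1]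
  have hgs : ∀ t : Set ℤ, g ⁻¹' t
      = (if (0:ℤ) ∈ t then g ⁻¹' {0} else ∅) ∪ (if (1:ℤ) ∈ t then g ⁻¹' {1} else ∅) := by
    intro t
    ext ω
    rcases hg ω with h0 | h0 <;>
      by_cases ht0 : (0:ℤ) ∈ t <;> by_cases ht1 : (1:ℤ) ∈ t <;>
        simp [h0, ht0, ht1]
  rw [indepFun_iff_measure_inter_preimage_eq_mul]
  intro s t _ _
  rw [hfs s, hgs t]
  by_cases hs0 : (0:ℤ) ∈ s <;> by_cases hs1 : (1:ℤ) ∈ s <;>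
    by_cases ht0 : (0:ℤ) ∈ t <;> by_cases ht1 : (1:ℤ) ∈ t <;>
      simp only [hs0, hs1, ht0, ht1, if_true, if_false, union_empty, empty_union,
        hA, hB, univ_inter, inter_univ, inter_empty, empty_inter,
        measure_empty, measure_univ, one_mul, mul_one, zero_mul, mul_zero] <;>
    first
      | rfl
      | exact h 0 0 (Or.inl rfl) (Or.inl rfl)
      | exact h 0 1 (Or.inl rfl) (Or.inr rfl)
      | exact h 1 0 (Or.inr rfl) (Or.inl rfl)
      | exact h 1 1 (Or.inr rfl) (Or.inr rfl)

/-- For `X` with the step density, for `j ∈ {2,3}` and all `b₁, b_j ∈ {0,1}`, the joint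
probabilities of `(B_1(X), B_j(X))` factor as the product of the marginals, with explicit
values `1/8` (when `b₁ = 0`) and `3/8` (when `b₁ = 1`); hence `B_1(X)` is independent of
`B_2(X)` and of `B_3(X)`, even though the density is not symmetric around `1/2`. -/
theorem binDigit_one_indep_stepDensity
    {Ω : Type*} [MeasureSpace Ω] [IsProbabilityMeasure (ℙ : Measure Ω)]
    (X : Ω → ℝ) (hX : Measurable X)
    (hlaw : Measure.map X ℙ = volume.withDensity (fun x => ENNReal.ofReal (stepDensity x))) :
    (∀ j : ℕ, (j = 2 ∨ j = 3) → ∀ b₁ bj : ℤ, (b₁ = 0 ∨ b₁ = 1) → (bj = 0 ∨ bj = 1) →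
      ℙ {ω | binDigit 1 (X ω) = b₁ ∧ binDigit j (X ω) = bj}
        = ℙ {ω | binDigit 1 (X ω) = b₁} * ℙ {ω | binDigit j (X ω) = bj} ∧
      ℙ {ω | binDigit 1 (X ω) = b₁ ∧ binDigit j (X ω) = bj}
        = if b₁ = 0 then 1/8 else 3/8) ∧
    (∀ j : ℕ, (j = 2 ∨ j = 3) →
      IndepFun (fun ω => binDigit 1 (X ω)) (fun ω => binDigit j (X ω)) ℙ) ∧
    ¬ (∀ ε ∈ Set.Icc (0:ℝ) (1/2), stepDensity (1/2 - ε) = stepDensity (1/2 + ε)) := by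
  have key : ∀ S : Set ℝ, MeasurableSet S →
      ℙ (X ⁻¹' S) = ENNReal.ofReal (1/2) * volume (S ∩ Ico (0:ℝ) (1/2))
        + ENNReal.ofReal (3/2) * volume (S ∩ Ico (1/2:ℝ) 1) := by
    intro S hS
    rw [← Measure.map_apply hX hS, hlaw, stepLaw_eq, Measure.add_apply,
      Measure.smul_apply, Measure.smul_apply, Measure.restrict_apply hS,
      Measure.restrict_apply hS, smul_eq_mul, smul_eq_mul, vol_Icc_Ico]
  have mS : ∀ (i : ℕ) (b : ℤ), MeasurableSet {x : ℝ | binDigit i x = b} := fun i b =>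
    (measurable_binDigit i) (measurableSet_singleton b)
  -- marginal of digit 1
  have m1 : ∀ b₁ : ℤ, (b₁ = 0 ∨ b₁ = 1) →
      ℙ {ω | binDigit 1 (X ω) = b₁}
        = if b₁ = 0 then ENNReal.ofReal (1/4) else ENNReal.ofReal (3/4) := by
    intro b₁ hb₁
    have hset : {ω | binDigit 1 (X ω) = b₁} = X ⁻¹' {x | binDigit 1 x = b₁} := rfl
    rw [hset, key _ (mS 1 b₁)]
    rcases hb₁ with rfl | rfl
    · have e1 : {x : ℝ | binDigit 1 x = 0} ∩ Ico (0:ℝ) (1/2) = Ico (0:ℝ) (1/2) :=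
        inter_eq_self_of_subset_right fun x hx => b1_left hx
      have e2 : {x : ℝ | binDigit 1 x = 0} ∩ Ico (1/2:ℝ) 1 = ∅ := by
        apply eq_empty_iff_forall_notMem.mpr
        rintro x ⟨hd, hI⟩
        have := b1_right hI
        simp only [mem_setOf_eq] at hd
        omega
      rw [e1, e2, Real.volume_Ico, measure_empty, mul_zero, add_zero, if_pos rfl,
        ← ENNReal.ofReal_mul (by norm_num)]
      norm_num
    · have e1 : {x : ℝ | binDigit 1 x = 1} ∩ Ico (0:ℝ) (1/2) = ∅ := by
        apply eq_empty_iff_forall_notMem.mpr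
        rintro x ⟨hd, hI⟩
        have := b1_left hI
        simp only [mem_setOf_eq] at hd
        omega
      have e2 : {x : ℝ | binDigit 1 x = 1} ∩ Ico (1/2:ℝ) 1 = Ico (1/2:ℝ) 1 :=
        inter_eq_self_of_subset_right fun x hx => b1_right hx
      rw [e1, e2, Real.volume_Ico, measure_empty, mul_zero, zero_add, if_neg (by norm_num),
        ← ENNReal.ofReal_mul (by norm_num)]
      norm_num
  -- master volume fact for digit j ∈ {2,3}
  have master : ∀ j : ℕ, (j = 2 ∨ j = 3) → ∀ b : ℤ, (b = 0 ∨ b = 1) →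
      volume ({x : ℝ | binDigit j x = b} ∩ Ico (0:ℝ) (1/2)) = ENNReal.ofReal (1/4) ∧
      volume ({x : ℝ | binDigit j x = b} ∩ Ico (1/2:ℝ) 1) = ENNReal.ofReal (1/4) := by
    have hdisj : ∀ a b c d : ℝ, b ≤ c → Disjoint (Ico a b) (Ico c d) := by
      intro a b c d h
      rw [Set.disjoint_left]
      rintro x ⟨_, h1⟩ ⟨h2, _⟩
      linarith
    rintro j (rfl | rfl) b (rfl | rfl)
    · constructor
      · rw [g20L, Real.volume_Ico]; norm_num
      · rw [g20R, Real.volume_Ico]; norm_num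
    · constructor
      · rw [g21L, Real.volume_Ico]; norm_num
      · rw [g21R, Real.volume_Ico]; norm_num
    · constructor
      · rw [g30L, measure_union (hdisj _ _ _ _ (by norm_num)) measurableSet_Ico,
          Real.volume_Ico, Real.volume_Ico, ← ENNReal.ofReal_add (by norm_num) (by norm_num)]
        norm_num
      · rw [g30R, measure_union (hdisj _ _ _ _ (by norm_num)) measurableSet_Ico,
          Real.volume_Ico, Real.volume_Ico, ← ENNReal.ofReal_add (by norm_num) (by norm_num)]
        norm_num
    · constructor
      · rw [g31L, measure_union (hdisj _ _ _ _ (by norm_num)) measurableSet_Ico,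
          Real.volume_Ico, Real.volume_Ico, ← ENNReal.ofReal_add (by norm_num) (by norm_num)]
        norm_num
      · rw [g31R, measure_union (hdisj _ _ _ _ (by norm_num)) measurableSet_Ico,
          Real.volume_Ico, Real.volume_Ico, ← ENNReal.ofReal_add (by norm_num) (by norm_num)]
        norm_num
  -- marginal of digit j
  have mj : ∀ j : ℕ, (j = 2 ∨ j = 3) → ∀ b : ℤ, (b = 0 ∨ b = 1) →
      ℙ {ω | binDigit j (X ω) = b} = ENNReal.ofReal (1/2) := by
    intro j hj b hb
    have hset : {ω | binDigit j (X ω) = b} = X ⁻¹' {x | binDigit j x = b} := rfl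
    rw [hset, key _ (mS j b), (master j hj b hb).1, (master j hj b hb).2,
      ← ENNReal.ofReal_mul (by norm_num), ← ENNReal.ofReal_mul (by norm_num),
      ← ENNReal.ofReal_add (by norm_num) (by norm_num)]
    norm_num
  -- joint
  have joint : ∀ j : ℕ, (j = 2 ∨ j = 3) → ∀ b₁ bj : ℤ, (b₁ = 0 ∨ b₁ = 1) → (bj = 0 ∨ bj = 1) →
      ℙ {ω | binDigit 1 (X ω) = b₁ ∧ binDigit j (X ω) = bj}
        = if b₁ = 0 then ENNReal.ofReal (1/8) else ENNReal.ofReal (3/8) := by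
    intro j hj b₁ bj hb₁ hbj
    have hset : {ω | binDigit 1 (X ω) = b₁ ∧ binDigit j (X ω) = bj}
        = X ⁻¹' ({x | binDigit 1 x = b₁} ∩ {x | binDigit j x = bj}) := rfl
    rw [hset, key _ ((mS 1 b₁).inter (mS j bj))]
    rcases hb₁ with rfl | rfl
    · have e1 : ({x : ℝ | binDigit 1 x = 0} ∩ {x | binDigit j x = bj}) ∩ Ico (0:ℝ) (1/2)
          = {x : ℝ | binDigit j x = bj} ∩ Ico (0:ℝ) (1/2) := by
        ext x
        simp only [mem_inter_iff, mem_setOf_eq]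
        constructor
        · rintro ⟨⟨_, h2⟩, h3⟩; exact ⟨h2, h3⟩
        · rintro ⟨h2, h3⟩; exact ⟨⟨b1_left h3, h2⟩, h3⟩
      have e2 : ({x : ℝ | binDigit 1 x = 0} ∩ {x | binDigit j x = bj}) ∩ Ico (1/2:ℝ) 1 = ∅ := by
        apply eq_empty_iff_forall_notMem.mpr
        rintro x ⟨⟨h1, _⟩, h3⟩
        have := b1_right h3
        simp only [mem_setOf_eq] at h1
        omega
      rw [e1, e2, (master j hj bj hbj).1, measure_empty, mul_zero, add_zero, if_pos rfl,
        ← ENNReal.ofReal_mul (by norm_num)]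
      norm_num
    · have e1 : ({x : ℝ | binDigit 1 x = 1} ∩ {x | binDigit j x = bj}) ∩ Ico (0:ℝ) (1/2) = ∅ := by
        apply eq_empty_iff_forall_notMem.mpr
        rintro x ⟨⟨h1, _⟩, h3⟩
        have := b1_left h3
        simp only [mem_setOf_eq] at h1
        omega
      have e2 : ({x : ℝ | binDigit 1 x = 1} ∩ {x | binDigit j x = bj}) ∩ Ico (1/2:ℝ) 1
          = {x : ℝ | binDigit j x = bj} ∩ Ico (1/2:ℝ) 1 := by
        ext x
        simp only [mem_inter_iff, mem_setOf_eq]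
        constructor
        · rintro ⟨⟨_, h2⟩, h3⟩; exact ⟨h2, h3⟩
        · rintro ⟨h2, h3⟩; exact ⟨⟨b1_right h3, h2⟩, h3⟩
      rw [e1, e2, (master j hj bj hbj).2, measure_empty, mul_zero, zero_add,
        if_neg (by norm_num), ← ENNReal.ofReal_mul (by norm_num)]
      norm_num
  have main1 : ∀ j : ℕ, (j = 2 ∨ j = 3) → ∀ b₁ bj : ℤ, (b₁ = 0 ∨ b₁ = 1) → (bj = 0 ∨ bj = 1) →
      ℙ {ω | binDigit 1 (X ω) = b₁ ∧ binDigit j (X ω) = bj}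
        = ℙ {ω | binDigit 1 (X ω) = b₁} * ℙ {ω | binDigit j (X ω) = bj} ∧
      ℙ {ω | binDigit 1 (X ω) = b₁ ∧ binDigit j (X ω) = bj}
        = if b₁ = 0 then 1/8 else 3/8 := by
    intro j hj b₁ bj hb₁ hbj
    rw [joint j hj b₁ bj hb₁ hbj, m1 b₁ hb₁, mj j hj bj hbj]
    rcases hb₁ with rfl | rfl
    · constructor
      · rw [if_pos rfl, if_pos rfl, ← ENNReal.ofReal_mul (by norm_num)]
        norm_num
      · rw [if_pos rfl, if_pos rfl, ENNReal.ofReal_div_of_pos (by norm_num)]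
        norm_num
    · constructor
      · rw [if_neg (by norm_num), if_neg (by norm_num), ← ENNReal.ofReal_mul (by norm_num)]
        norm_num
      · rw [if_neg (by norm_num), if_neg (by norm_num), ENNReal.ofReal_div_of_pos (by norm_num)]
        norm_num
  refine ⟨main1, ?_, ?_⟩
  · intro j hj
    apply indep_of_binary (fun ω => binDigit_zero_or_one 1 (X ω))
      (fun ω => binDigit_zero_or_one j (X ω))
    intro a b ha hb
    exact (main1 j hj a b ha hb).1
  · intro h
    have h1 := h (1/4) (by norm_num)
    simp only [stepDensity, mem_Ico, mem_Icc] at h1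
    norm_num at h1
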